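/- Hölder convolution relation in weight 3: ζ(3) = δ_{2,1} + (ln 2)³/2 + δ₂·ln 2 + δ₃, where δ_{2,1} = ∑_{n>m≥1} (1/2)ⁿ/(n²m), δ₂ = Li₂(1/2), δ₃ = Li₃(1/2). -/

import Mathlib

/-!
Write `Li_s(x) = ∑ xⁿ/nˢ` and `A(x) = ∑ Hₙ xⁿ/n²`. Since `∑_{0<m<n} 1/m = Hₙ - 1/n`, we have
`δ_{2,1} = A(1/2) - Li₃(1/2)`. The Euler operator `x d/dx` lowers the weight of these series by
one, and `∑ Hₙ xⁿ = -log(1-x)/(1-x)` is a Cauchy product; from this,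
`∑ Hₙ xⁿ/n = Li₂(x) + log²(1-x)/2`, and the function
`A(x) - Li₃(x) + Li₃(1-x) - Li₂(1-x) log(1-x) - log x log²(1-x)/2`
has zero derivative on `(0,1)` and tends to `ζ(3)` as `x → 0⁺`. Evaluating it at `x = 1/2` gives
the relation.
-/

open Filter Set Real Topology

noncomputable def deltaD (s t : ℕ) : ℝ :=
  ∑' n : ℕ, ∑' m : ℕ,
    if 0 < m ∧ m < n then (1/2 : ℝ) ^ n / ((n : ℝ) ^ s * (m : ℝ) ^ t) else 0

noncomputable def powerSeriesSum (a : ℕ → ℝ) (x : ℝ) : ℝ := ∑' n, a n * x ^ n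

lemma summable_natCast_mul_pow_pred {r : ℝ} (hr : |r| < 1) :
    Summable fun n : ℕ ↦ (n : ℝ) * r ^ (n - 1) := by
  rw [← summable_nat_add_iff 1]
  have h := (summable_pow_mul_geometric_of_norm_lt_one 1 (r := r) hr).add
    (summable_geometric_of_abs_lt_one hr)
  simpa [add_mul] using h

section PowerSeriesSum

variable {a : ℕ → ℝ}

lemma summable_mul_pow_of_abs_le_one (ha : ∀ n, |a n| ≤ 1) {x : ℝ} (hx : |x| < 1) :
    Summable fun n ↦ a n * x ^ n := by
  refine .of_norm_bounded (summable_geometric_of_lt_one (abs_nonneg x) hx) fun n ↦ ?_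
  rw [norm_mul, norm_pow, Real.norm_eq_abs, Real.norm_eq_abs]
  exact mul_le_of_le_one_left (by positivity) (ha n)

lemma powerSeriesSum_zero_right (a : ℕ → ℝ) : powerSeriesSum a 0 = a 0 := by
  rw [powerSeriesSum, tsum_eq_single 0 fun n hn ↦ by simp [hn]]
  simp

lemma hasDerivAt_powerSeriesSum (ha : ∀ n, |a n| ≤ 1) {x : ℝ} (hx : |x| < 1) :
    HasDerivAt (powerSeriesSum a) (∑' n, a n * (n * x ^ (n - 1))) x := by
  set r := (1 + |x|) / 2
  have hxr : |x| < r := by simp only [r]; linarith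
  have hr : |r| < 1 := by rw [abs_of_pos (by positivity)]; simp only [r]; linarith
  refine hasDerivAt_tsum_of_isPreconnected (summable_natCast_mul_pow_pred hr)
    Metric.isOpen_ball (convex_ball 0 r).isPreconnected
    (fun n y _ ↦ (hasDerivAt_pow n y).const_mul (a n)) (fun n y hy ↦ ?_)
    (Metric.mem_ball_self (by positivity)) (summable_mul_pow_of_abs_le_one ha (by simp))
    (by simpa using hxr)
  rw [mem_ball_zero_iff, Real.norm_eq_abs] at hy
  rw [norm_mul, norm_mul, norm_pow, Real.norm_eq_abs, Real.norm_eq_abs, Real.norm_eq_abs,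
    Nat.abs_cast]
  calc |a n| * (n * |y| ^ (n - 1)) ≤ 1 * (n * r ^ (n - 1)) := by gcongr; exact ha n
    _ = _ := one_mul _

lemma hasDerivAt_powerSeriesSum_of_mul_eq {b : ℕ → ℝ} (ha : ∀ n, |a n| ≤ 1)
    (hab : ∀ n, n * a n = b n) {x : ℝ} (hx : |x| < 1) (hx0 : x ≠ 0) :
    HasDerivAt (powerSeriesSum a) (powerSeriesSum b x / x) x := by
  convert hasDerivAt_powerSeriesSum ha hx using 1
  rw [powerSeriesSum, ← tsum_div_const]
  refine tsum_congr fun n ↦ ?_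
  rw [← hab n]
  rcases n with _ | n
  · simp
  · rw [Nat.add_sub_cancel, pow_succ]
    field_simp

lemma tendsto_powerSeriesSum_nhdsGT_zero (ha : ∀ n, |a n| ≤ 1) (ha0 : a 0 = 0) :
    Tendsto (powerSeriesSum a) (𝓝[>] 0) (𝓝 0) := by
  have h := (hasDerivAt_powerSeriesSum ha (x := 0) (by simp)).continuousAt
  simpa [powerSeriesSum_zero_right, ha0] using h.tendsto.mono_left nhdsWithin_le_nhds

lemma continuousOn_powerSeriesSum (ha : Summable fun n ↦ |a n|) :
    ContinuousOn (powerSeriesSum a) (Icc (-1) 1) := by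
  refine continuousOn_tsum (fun n ↦ by fun_prop) ha fun n y hy ↦ ?_
  rw [norm_mul, norm_pow, Real.norm_eq_abs, Real.norm_eq_abs]
  exact mul_le_of_le_one_right (abs_nonneg _) (pow_le_one₀ (abs_nonneg y) (abs_le.2 hy))

lemma tendsto_powerSeriesSum_one_sub (ha : Summable fun n ↦ |a n|) :
    Tendsto (fun y ↦ powerSeriesSum a (1 - y)) (𝓝[>] 0) (𝓝 (powerSeriesSum a 1)) := by
  have hmaps : MapsTo (fun y : ℝ ↦ 1 - y) (Icc 0 2) (Icc (-1) 1) := fun y hy ↦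
    ⟨by linarith [hy.2], by linarith [hy.1]⟩
  have h := (continuousOn_powerSeriesSum ha).comp (by fun_prop) hmaps 0 (by simp)
  simpa [Function.comp_def] using
    h.tendsto.mono_left (nhdsWithin_le_of_mem (Icc_mem_nhdsGT two_pos))

end PowerSeriesSum

-- At `n = 0` the coefficients are `1 / 0 ^ s = 0` for `s ≠ 0` and `harmonic 0 / 0 ^ s = 0`, so
-- these series start at `n = 1` as in the paper.
noncomputable def polylog (s : ℕ) (x : ℝ) : ℝ := powerSeriesSum (fun n ↦ 1 / (n : ℝ) ^ s) x

noncomputable def harmonicLi (s : ℕ) (x : ℝ) : ℝ :=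
  powerSeriesSum (fun n ↦ harmonic n / (n : ℝ) ^ s) x

lemma abs_one_div_natCast_pow_le_one (s n : ℕ) : |1 / (n : ℝ) ^ s| ≤ 1 := by
  rcases n.eq_zero_or_pos with rfl | hn
  · rcases s with _ | s <;> simp
  · rw [abs_of_nonneg (by positivity)]
    exact div_le_one_of_le₀ (one_le_pow₀ (by exact_mod_cast hn)) (by positivity)

lemma harmonic_le_self (n : ℕ) : (harmonic n : ℝ) ≤ n := by
  rcases n.eq_zero_or_pos with rfl | hn
  · simp
  · have hn' : (0 : ℝ) < n := by exact_mod_cast hn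
    have := harmonic_le_one_add_log n
    linarith [Real.log_le_sub_one_of_pos hn']

lemma abs_harmonic_div_natCast_pow_le_one {s : ℕ} (hs : s ≠ 0) (n : ℕ) :
    |(harmonic n : ℝ) / (n : ℝ) ^ s| ≤ 1 := by
  rcases n.eq_zero_or_pos with rfl | hn
  · simp
  · have hn' : (1 : ℝ) ≤ n := by exact_mod_cast hn
    have hH : (0 : ℝ) ≤ harmonic n := by exact_mod_cast (harmonic_pos hn.ne').le
    rw [abs_of_nonneg (by positivity)]
    refine div_le_one_of_le₀ ((harmonic_le_self n).trans ?_) (by positivity)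
    simpa using pow_le_pow_right₀ hn' (Nat.one_le_iff_ne_zero.2 hs)

lemma summable_abs_one_div_natCast_pow {s : ℕ} (hs : 1 < s) :
    Summable fun n : ℕ ↦ |1 / (n : ℝ) ^ s| :=
  (Real.summable_one_div_nat_pow.2 hs).congr fun n ↦ (abs_of_nonneg (by positivity)).symm

lemma hasSum_pow_div_natCast {x : ℝ} (hx : |x| < 1) :
    HasSum (fun n : ℕ ↦ x ^ n / n) (-log (1 - x)) := by
  rw [← hasSum_nat_add_iff' 1]
  simpa using Real.hasSum_pow_div_log_of_abs_lt_one hx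

lemma polylog_one {x : ℝ} (hx : |x| < 1) : polylog 1 x = -log (1 - x) := by
  rw [← (hasSum_pow_div_natCast hx).tsum_eq, polylog, powerSeriesSum]
  simp only [pow_one, one_div_mul_eq_div]

lemma hasDerivAt_polylog_succ {s : ℕ} (hs : s ≠ 0) {x : ℝ} (hx : |x| < 1) (hx0 : x ≠ 0) :
    HasDerivAt (polylog (s + 1)) (polylog s x / x) x := by
  refine hasDerivAt_powerSeriesSum_of_mul_eq (abs_one_div_natCast_pow_le_one _) (fun n ↦ ?_)
    hx hx0
  rcases n.eq_zero_or_pos with rfl | hn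
  · simp [hs]
  · field_simp
    ring

lemma hasDerivAt_harmonicLi_succ (s : ℕ) {x : ℝ} (hx : |x| < 1) (hx0 : x ≠ 0) :
    HasDerivAt (harmonicLi (s + 1)) (harmonicLi s x / x) x := by
  refine hasDerivAt_powerSeriesSum_of_mul_eq
    (abs_harmonic_div_natCast_pow_le_one s.succ_ne_zero) (fun n ↦ ?_) hx hx0
  rcases n.eq_zero_or_pos with rfl | hn
  · simp
  · field_simp
    rw [pow_succ]
    ring

lemma harmonic_mul_pow_eq_sum_range (n : ℕ) (x : ℝ) :
    (harmonic n : ℝ) * x ^ n = ∑ k ∈ Finset.range (n + 1), x ^ k / k * x ^ (n - k) := by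
  have hterm : ∀ k ∈ Finset.range (n + 1), x ^ k / k * x ^ (n - k) = x ^ n * (k : ℝ)⁻¹ := by
    intro k hk
    rw [← pow_sub_mul_pow x (Nat.lt_succ_iff.1 (Finset.mem_range.1 hk))]
    ring
  rw [Finset.sum_congr rfl hterm, ← Finset.mul_sum, Finset.sum_range_succ', harmonic]
  push_cast
  simp [mul_comm]

lemma harmonicLi_zero {x : ℝ} (hx : |x| < 1) : harmonicLi 0 x = -log (1 - x) / (1 - x) := by
  have hgeom : Summable fun n ↦ ‖x ^ n‖ := by
    simpa [norm_pow] using summable_geometric_of_lt_one (abs_nonneg x) hx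
  have hlog : Summable fun n : ℕ ↦ ‖x ^ n / n‖ :=
    hgeom.of_nonneg_of_le (fun _ ↦ norm_nonneg _) fun n ↦ by
      rcases n with _ | n
      · simp
      · rw [norm_div, Real.norm_natCast]
        exact div_le_self (norm_nonneg _) (by simp)
  have h := hasSum_sum_range_mul_of_summable_norm hlog hgeom
  rw [(hasSum_pow_div_natCast hx).tsum_eq, tsum_geometric_of_abs_lt_one hx] at h
  rw [harmonicLi, powerSeriesSum, div_eq_mul_inv, ← h.tsum_eq]
  simp only [pow_zero, div_one, harmonic_mul_pow_eq_sum_range]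

lemma eqOn_Ioo_of_hasDerivAt_zero_of_tendsto {f : ℝ → ℝ} {a b c : ℝ}
    (hf : ∀ x ∈ Ioo a b, HasDerivAt f 0 x) (hlim : Tendsto f (𝓝[>] a) (𝓝 c)) :
    EqOn f (fun _ ↦ c) (Ioo a b) := by
  intro x hx
  have hconst : ∀ y ∈ Ioo a b, f y = f x := fun y hy ↦
    isOpen_Ioo.is_const_of_deriv_eq_zero isPreconnected_Ioo
      (fun z hz ↦ (hf z hz).differentiableAt.differentiableWithinAt)
      (fun z hz ↦ (hf z hz).deriv) hy hx
  refine tendsto_nhds_unique (tendsto_const_nhds.congr' ?_) hlim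
  filter_upwards [Ioo_mem_nhdsGT (hx.1.trans hx.2)] with y hy using (hconst y hy).symm

lemma tendsto_log_one_sub_nhdsGT_zero : Tendsto (fun x ↦ log (1 - x)) (𝓝[>] 0) (𝓝 0) := by
  have h : ContinuousAt (fun x ↦ log (1 - x)) 0 := (continuousAt_log (by simp)).comp (by fun_prop)
  simpa using h.tendsto.mono_left nhdsWithin_le_nhds

lemma tendsto_log_mul_log_one_sub_sq :
    Tendsto (fun x ↦ log x * log (1 - x) ^ 2) (𝓝[>] 0) (𝓝 0) := by
  have hxlog : Tendsto (fun x ↦ log x * x) (𝓝[>] 0) (𝓝 0) := by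
    simpa using tendsto_log_mul_rpow_nhdsGT_zero zero_lt_one
  have hslope : Tendsto (fun x ↦ log (1 - x) / x) (𝓝[>] 0) (𝓝 (-1)) := by
    have h := ((Real.hasDerivAt_log (by norm_num : (1 : ℝ) - 0 ≠ 0)).comp_const_sub 1 0)
      |>.tendsto_slope_zero_right
    simpa [div_eq_inv_mul] using h
  have h := (hxlog.mul hslope).mul tendsto_log_one_sub_nhdsGT_zero
  rw [zero_mul, zero_mul] at h
  refine h.congr' (eventually_mem_nhdsWithin.mono fun x hx ↦ ?_)
  field_simp [(ne_of_gt hx : x ≠ 0)]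

lemma harmonicLi_one {x : ℝ} (hx : x ∈ Ioo 0 1) :
    harmonicLi 1 x = polylog 2 x + log (1 - x) ^ 2 / 2 := by
  let F y := harmonicLi 1 y - polylog 2 y - log (1 - y) ^ 2 / 2
  have hderiv : ∀ y ∈ Ioo (0 : ℝ) 1, HasDerivAt F 0 y := by
    intro y ⟨hy0, hy1⟩
    have hy : |y| < 1 := abs_lt.2 ⟨by linarith, hy1⟩
    have hlog := ((Real.hasDerivAt_log (by linarith : 1 - y ≠ 0)).comp_const_sub 1 y).fun_pow 2
    refine (((hasDerivAt_harmonicLi_succ 0 hy hy0.ne').sub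
      (hasDerivAt_polylog_succ one_ne_zero hy hy0.ne')).sub (hlog.div_const 2)).congr_deriv ?_
    rw [harmonicLi_zero hy, polylog_one hy]
    field_simp [(by linarith : 1 - y ≠ 0)]
    ring
  have hlim : Tendsto F (𝓝[>] 0) (𝓝 0) := by
    have h := ((tendsto_powerSeriesSum_nhdsGT_zero
      (abs_harmonic_div_natCast_pow_le_one one_ne_zero) (by simp)).sub
      (tendsto_powerSeriesSum_nhdsGT_zero (abs_one_div_natCast_pow_le_one 2) (by simp))).sub
      ((tendsto_log_one_sub_nhdsGT_zero.pow 2).div_const 2)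
    simpa [F, harmonicLi, polylog] using h
  have h := eqOn_Ioo_of_hasDerivAt_zero_of_tendsto hderiv hlim hx
  simp only [F] at h
  linarith

lemma harmonicLi_two_reflection {x : ℝ} (hx : x ∈ Ioo 0 1) :
    harmonicLi 2 x - polylog 3 x + polylog 3 (1 - x) - polylog 2 (1 - x) * log (1 - x)
      - log x * log (1 - x) ^ 2 / 2 = polylog 3 1 := by
  let F y := harmonicLi 2 y - polylog 3 y + polylog 3 (1 - y) - polylog 2 (1 - y) * log (1 - y)
      - log y * log (1 - y) ^ 2 / 2
  have hderiv : ∀ y ∈ Ioo (0 : ℝ) 1, HasDerivAt F 0 y := by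
    intro y hy
    have hy' : |y| < 1 := abs_lt.2 ⟨by linarith [hy.1], hy.2⟩
    have hz' : |1 - y| < 1 := abs_lt.2 ⟨by linarith [hy.2], by linarith [hy.1]⟩
    have hy0 : y ≠ 0 := hy.1.ne'
    have hz0 : 1 - y ≠ 0 := by linarith [hy.2]
    have hL := (Real.hasDerivAt_log hz0).comp_const_sub 1 y
    have hLi3 := (hasDerivAt_polylog_succ two_ne_zero hz' hz0).comp_const_sub 1 y
    have hLi2 := (hasDerivAt_polylog_succ one_ne_zero hz' hz0).comp_const_sub 1 y
    refine ((((hasDerivAt_harmonicLi_succ 1 hy' hy0).sub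
      (hasDerivAt_polylog_succ two_ne_zero hy' hy0)).add hLi3).sub (hLi2.mul hL)).sub
      (((Real.hasDerivAt_log hy0).mul (hL.fun_pow 2)).div_const 2) |>.congr_deriv ?_
    rw [harmonicLi_one hy, polylog_one hz', sub_sub_cancel]
    field_simp
    ring
  have hlim : Tendsto F (𝓝[>] 0) (𝓝 (polylog 3 1)) := by
    have hA := tendsto_powerSeriesSum_nhdsGT_zero
      (abs_harmonic_div_natCast_pow_le_one two_ne_zero) (by simp)
    have hLi3 := tendsto_powerSeriesSum_nhdsGT_zero (abs_one_div_natCast_pow_le_one 3) (by simp)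
    have hLi3' := tendsto_powerSeriesSum_one_sub
      (summable_abs_one_div_natCast_pow (s := 3) (by simp))
    have hLi2' := tendsto_powerSeriesSum_one_sub
      (summable_abs_one_div_natCast_pow (s := 2) (by simp))
    have h := (((hA.sub hLi3).add hLi3').sub (hLi2'.mul tendsto_log_one_sub_nhdsGT_zero)).sub
      (tendsto_log_mul_log_one_sub_sq.div_const 2)
    rwa [show polylog 3 1 = 0 - 0 + polylog 3 1 - polylog 2 1 * 0 - 0 / 2 by ring]
  exact eqOn_Ioo_of_hasDerivAt_zero_of_tendsto hderiv hlim hx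

lemma harmonicLi_two_half :
    harmonicLi 2 (1 / 2) = polylog 3 1 - polylog 2 (1 / 2) * log 2 - log 2 ^ 3 / 2 := by
  have h := harmonicLi_two_reflection (x := 1 / 2) ⟨by norm_num, by norm_num⟩
  rw [show (1 : ℝ) - 1 / 2 = 1 / 2 by norm_num, show log (1 / 2) = -log 2 by simp] at h
  linear_combination h

lemma tsum_ite_inv_eq_harmonic_sub (n : ℕ) :
    ∑' m : ℕ, (if 0 < m ∧ m < n then (m : ℝ)⁻¹ else 0) = harmonic n - (n : ℝ)⁻¹ := by
  rw [tsum_eq_sum (s := Finset.range n) fun m hm ↦ if_neg fun h ↦ hm (Finset.mem_range.2 h.2)]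
  rcases n with _ | k
  · simp
  · rw [harmonic_succ, Finset.sum_range_succ', harmonic]
    push_cast
    simpa using Finset.sum_congr rfl fun i hi ↦ if_pos (Finset.mem_range.1 hi)

lemma deltaD_two_one : deltaD 2 1 = harmonicLi 2 (1 / 2) - polylog 3 (1 / 2) := by
  have hhalf : |(1 / 2 : ℝ)| < 1 := by norm_num
  rw [harmonicLi, polylog, powerSeriesSum, powerSeriesSum, ← Summable.tsum_sub
    (summable_mul_pow_of_abs_le_one (abs_harmonic_div_natCast_pow_le_one two_ne_zero) hhalf)
    (summable_mul_pow_of_abs_le_one (abs_one_div_natCast_pow_le_one 3) hhalf)]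
  refine tsum_congr fun n ↦ ?_
  have hterm : ∀ m : ℕ, (if 0 < m ∧ m < n then (1 / 2 : ℝ) ^ n / ((n : ℝ) ^ 2 * (m : ℝ) ^ 1)
      else 0) = (1 / 2 : ℝ) ^ n / (n : ℝ) ^ 2 * if 0 < m ∧ m < n then (m : ℝ)⁻¹ else 0 := by
    intro m
    split_ifs
    · field_simp
    · rw [mul_zero]
  rw [tsum_congr hterm, tsum_mul_left, tsum_ite_inv_eq_harmonic_sub]
  ring

theorem holder_wt3 :
    ∑' n : ℕ, 1 / (n : ℝ) ^ 3
      = deltaD 2 1 + (Real.log 2) ^ 3 / 2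
        + (∑' n : ℕ, (1/2 : ℝ) ^ n / (n : ℝ) ^ 2) * Real.log 2
        + ∑' n : ℕ, (1/2 : ℝ) ^ n / (n : ℝ) ^ 3 := by
  have hzeta : ∑' n : ℕ, 1 / (n : ℝ) ^ 3 = polylog 3 1 := by simp [polylog, powerSeriesSum]
  have hhalf (s : ℕ) : ∑' n : ℕ, (1 / 2 : ℝ) ^ n / (n : ℝ) ^ s = polylog s (1 / 2) :=
    tsum_congr fun n ↦ by ring
  rw [hzeta, hhalf, hhalf, deltaD_two_one, harmonicLi_two_half]
  ring
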